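/- Let Λ_n (n ∈ ℕ) and Λ be r-uniformly discrete coloured point sets in E, with associated point measures λ_n = Σ_{(x,i)∈Λ_n} δ_{(x,i)} and λ = Σ_{(x,i)∈Λ} δ_{(x,i)}. Then λ_n → λ vaguely (i.e. λ_n(f) → λ(f) for every continuous compactly supported f : E → ℂ) if and only if Λ_n → Λ in the local topology: for all R > 0 and ε > 0 there is N such that for all n ≥ N one has C_R ∩ Λ_n ⊆ C_ε + Λ and C_R ∩ Λ ⊆ C_ε + Λ_n. -/

import Mathlib

open MeasureTheory Filter Topology Set
open scoped RealInnerProductSpace ENNReal NNReal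

noncomputable section

/-- The ambient space `ℝ^d`. -/
abbrev Vd (d : ℕ) := EuclideanSpace ℝ (Fin d)

/-- The coloured space `E = ℝ^d × {1,…,m}`. -/
abbrev Em (d m : ℕ) := EuclideanSpace ℝ (Fin d) × Fin m

/-- The open cube `C_R = (−R/2, R/2)^d`. -/
def cube (d : ℕ) (R : ℝ) : Set (Vd d) := {x | ∀ i, |x i| < R / 2}

/-- Translation of a subset of `ℝ^d` by `t`. -/
def tr {d : ℕ} (t : Vd d) (B : Set (Vd d)) : Set (Vd d) := (fun x => t + x) '' B

/-- Translation of a coloured point set by `t ∈ ℝ^d`. -/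
def trc {d m : ℕ} (t : Vd d) (Λ : Set (Em d m)) : Set (Em d m) :=
  (fun p => (t + p.1, p.2)) '' Λ

/-- `B + Λ` for `B ⊆ ℝ^d` and a coloured point set `Λ`. -/
def addc {d m : ℕ} (B : Set (Vd d)) (Λ : Set (Em d m)) : Set (Em d m) :=
  {p | ∃ b ∈ B, ∃ q ∈ Λ, p = (b + q.1, q.2)}

/-- `B ∩ Λ := {(x,i) ∈ Λ : x ∈ B}`. -/
def restc {d m : ℕ} (B : Set (Vd d)) (Λ : Set (Em d m)) : Set (Em d m) :=
  {p ∈ Λ | p.1 ∈ B}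

/-- A coloured point set is `r`-uniformly discrete: every translate of the cube `C_r`
contains (in `ℝ^d`) at most one point of `Λ`. -/
def UDc {d m : ℕ} (r : ℝ) (Λ : Set (Em d m)) : Prop :=
  ∀ a : Vd d, {p ∈ Λ | p.1 ∈ tr a (cube d r)}.Subsingleton

/-- The colour-`i` section `Λ^i = {x : (x,i) ∈ Λ}`. -/
def sec {d m : ℕ} (i : Fin m) (Λ : Set (Em d m)) : Set (Vd d) := {x | (x, i) ∈ Λ}

/-- The flattening `Λ^↓ = ∪_i Λ^i`. -/
def flat {d m : ℕ} (Λ : Set (Em d m)) : Set (Vd d) := {x | ∃ i, (x, i) ∈ Λ}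

/-- The weighted counting function `N^w_f(Λ) = ∑_i w_i ∑_{x ∈ Λ^i} f x`. -/
def Nw {d m : ℕ} (w : Fin m → ℝ) (f : Vd d → ℂ) (Λ : Set (Em d m)) : ℂ :=
  ∑ i, (w i : ℂ) * ∑' x : sec i Λ, f (x : Vd d)

/-- The vague topology on coloured point sets: the initial topology for the maps
`Λ ↦ ∑_{p ∈ Λ} f p`, `f` continuous with compact support on `E`. -/
def vagueTopC (d m : ℕ) : TopologicalSpace (Set (Em d m)) :=
  ⨅ (f : Em d m → ℂ) (_ : Continuous f) (_ : HasCompactSupport f),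
    TopologicalSpace.induced (fun Λ : Set (Em d m) => ∑' p : Λ, f (p : Em d m)) inferInstance

instance (priority := 2000) instTopConfigC (d m : ℕ) : TopologicalSpace (Set (Em d m)) :=
  vagueTopC d m
instance (priority := 2000) instMeasConfigC (d m : ℕ) : MeasurableSpace (Set (Em d m)) := borel _
instance (priority := 2000) instBorelConfigC (d m : ℕ) : BorelSpace (Set (Em d m)) := ⟨rfl⟩

/-- An `m`-coloured uniformly discrete stationary ergodic point process with hull `X`,
law `μ` and colour intensities `Ii`. -/
structure IsPPc (d m : ℕ) (r : ℝ) (X : Set (Set (Em d m)))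
    (μ : Measure (Set (Em d m))) (Ii : Fin m → ℝ≥0) : Prop where
  nonempty : X.Nonempty
  closedX : IsClosed X
  invX : ∀ t : Vd d, trc t '' X = X
  ud : ∀ Λ ∈ X, UDc r Λ
  prob : IsProbabilityMeasure μ
  suppX : μ Xᶜ = 0
  stationary : ∀ t : Vd d, μ.map (trc t) = μ
  ergodic : ∀ D : Set (Set (Em d m)), MeasurableSet D → (∀ t : Vd d, trc t '' D = D) →
    μ D = 0 ∨ μ D = 1
  Ipos : ∀ i, 0 < Ii i
  intensity : ∀ i, ∀ A : Set (Vd d), MeasurableSet A →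
    ∫⁻ Λ, ((sec i Λ ∩ A).encard : ℝ≥0∞) ∂μ = (Ii i : ℝ≥0∞) * volume A

/-- The family of colour Palm measures `μ̇^(i)`:
`ℓ(B)·μ̇^(i)(D) = ∫_X ∑_{x ∈ Λ^i ∩ B} 1_D(−x+Λ) dμ(Λ)`.  The weighted Palm measure is
`μ̇^w = ∑_i w_i μ̇^(i)`. -/
def IsColourPalm {d m : ℕ} (μ : Measure (Set (Em d m)))
    (μp : Fin m → Measure (Set (Em d m))) : Prop :=
  ∀ i, IsFiniteMeasure (μp i) ∧
    ∀ D : Set (Set (Em d m)), MeasurableSet D → ∀ B : Set (Vd d), MeasurableSet B →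
      0 < volume B → volume B < ⊤ →
      volume B * μp i D =
        ∫⁻ Λ, ∑' x : ↥(sec i Λ ∩ B), D.indicator (fun _ => (1 : ℝ≥0∞)) (trc (-(x : Vd d)) Λ) ∂μ

/-- The character `x ↦ e^{2πi k·x}`. -/
def char {d : ℕ} (k x : Vd d) : ℂ :=
  Complex.exp (2 * Real.pi * Complex.I * ((⟪k, x⟫ : ℝ) : ℂ))

/-- The Fourier transform `f̂(y) = ∫ f(x) e^{−2πi x·y} dx`. -/
def fint {d : ℕ} (f : Vd d → ℂ) (y : Vd d) : ℂ := ∫ x, char x (-y) * f x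

/-- `ω^w` is the diffraction: a translation-bounded positive measure on `ℝ^d` which is the
Fourier transform of the weighted first moment `μ̇^w_1` of the weighted Palm measure, i.e.
`∫ φ dω^w = μ̇^w_1(φ̂) = ∫ N^w_{φ̂} dμ̇^w` for every Schwartz function `φ`. -/
def IsDiffraction {d m : ℕ} (w : Fin m → ℝ) (μp : Fin m → Measure (Set (Em d m)))
    (ω : Measure (Vd d)) : Prop :=
  (∀ K : Set (Vd d), IsCompact K → (⨆ a : Vd d, ω (tr a K)) < ⊤) ∧
  ∀ φ : SchwartzMap (Vd d) ℂ,
    ∫ x, φ x ∂ω = ∑ i, (w i : ℂ) * ∫ Λ, Nw w (fun y => fint (fun x => φ x) y) Λ ∂(μp i)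

/-!
A uniformly discrete set meets every bounded region in finitely many points, so both modes of
convergence only ever involve finitely many points at a time. If `λₙ → λ` vaguely, a Urysohn
function equal to `1` at a point `p ∈ Λ` and supported in a small ball of the colour of `p` shows
that `Λₙ` eventually has a point near `p`; a Urysohn function vanishing on `Λ` and equal to `1`
on the part of a bounded region that is far from `Λ` shows that `Λₙ` eventually misses that part.
Conversely, under local convergence every point `p` of `Λ` near the support of `f` eventually
has a unique partner in `Λₙ` close to `p`; these partners tend to `p` and exhaust `Λₙ` on the
support of `f`, so `λₙ(f)` is eventually a sum over a fixed finite set of terms tending to those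
of `λ(f)`. Cubes are Euclidean balls up to a factor `√d`, so none of this depends on the cubes.
-/

open Metric Bornology

section ColouredPointSets

variable {X ι α : Type*} [MetricSpace X]

def colouredThickening (δ : ℝ) (Λ : Set (X × ι)) : Set (X × ι) :=
  {p | ∃ q ∈ Λ, q.2 = p.2 ∧ dist p.1 q.1 < δ}

def UniformlyDiscrete (s : ℝ) (Λ : Set (X × ι)) : Prop :=
  Λ.Pairwise fun p q => s ≤ dist p.1 q.1

def LocallyConverges (l : Filter α) (Λs : α → Set (X × ι)) (Λ : Set (X × ι)) : Prop :=
  ∀ K : Set X, IsBounded K → ∀ δ > 0, ∀ᶠ n in l,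
    Λs n ∩ Prod.fst ⁻¹' K ⊆ colouredThickening δ Λ ∧
      Λ ∩ Prod.fst ⁻¹' K ⊆ colouredThickening δ (Λs n)

def VaguelyConverges [TopologicalSpace ι] (l : Filter α) (Λs : α → Set (X × ι))
    (Λ : Set (X × ι)) : Prop :=
  ∀ f : X × ι → ℂ, Continuous f → HasCompactSupport f →
    Tendsto (fun n => ∑' p : Λs n, f p) l (𝓝 (∑' p : Λ, f p))

lemma isOpen_colouredThickening [TopologicalSpace ι] [DiscreteTopology ι] (δ : ℝ)
    (Λ : Set (X × ι)) : IsOpen (colouredThickening δ Λ) := by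
  have : colouredThickening δ Λ = ⋃ q ∈ Λ, ball q.1 δ ×ˢ {q.2} := by
    ext p
    simp [colouredThickening, eq_comm, and_comm]
  rw [this]
  exact isOpen_biUnion fun q _ => isOpen_ball.prod (isOpen_discrete _)

lemma closure_subset_colouredThickening [TopologicalSpace ι] [DiscreteTopology ι] {δ : ℝ}
    (hδ : 0 < δ) (Λ : Set (X × ι)) : closure Λ ⊆ colouredThickening δ Λ := by
  intro p hp
  obtain ⟨q, ⟨hq₁, hq₂⟩, hqΛ⟩ := mem_closure_iff.1 hp (ball p.1 δ ×ˢ {p.2})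
    (isOpen_ball.prod (isOpen_discrete _)) ⟨mem_ball_self hδ, rfl⟩
  exact ⟨q, hqΛ, hq₂, by rw [dist_comm]; exact hq₁⟩

namespace UniformlyDiscrete

variable {s : ℝ} {Λ : Set (X × ι)}

lemma eq_of_dist_lt (hΛ : UniformlyDiscrete s Λ) {p q : X × ι} (hp : p ∈ Λ) (hq : q ∈ Λ)
    (hpq : dist p.1 q.1 < s) : p = q := by
  by_contra hne
  exact (hΛ hp hq hne).not_gt hpq

lemma finite_inter_preimage_fst [ProperSpace X] (hΛ : UniformlyDiscrete s Λ) (hs : 0 < s)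
    {K : Set X} (hK : IsBounded K) : (Λ ∩ Prod.fst ⁻¹' K).Finite := by
  obtain ⟨t, -, ht, hKt⟩ := finite_approx_of_totallyBounded
    (hK.isCompact_closure.totallyBounded.subset subset_closure) (s / 2) (half_pos hs)
  have hcover : Λ ∩ Prod.fst ⁻¹' K ⊆ ⋃ y ∈ t, Λ ∩ Prod.fst ⁻¹' ball y (s / 2) := by
    rintro p ⟨hpΛ, hpK⟩
    obtain ⟨y, hy, hpy⟩ := mem_iUnion₂.1 (hKt hpK)
    exact mem_iUnion₂.2 ⟨y, hy, hpΛ, hpy⟩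
  refine (ht.biUnion fun y _ => Subsingleton.finite ?_).subset hcover
  rintro p ⟨hpΛ, hpy⟩ q ⟨hqΛ, hqy⟩
  refine hΛ.eq_of_dist_lt hpΛ hqΛ ?_
  calc dist p.1 q.1 ≤ dist p.1 y + dist q.1 y := dist_triangle_right _ _ _
    _ < s / 2 + s / 2 := add_lt_add hpy hqy
    _ = s := add_halves s

lemma summable [ProperSpace X] [TopologicalSpace ι] (hΛ : UniformlyDiscrete s Λ) (hs : 0 < s)
    {M : Type*} [AddCommMonoid M] [TopologicalSpace M] {f : X × ι → M}
    (hf : HasCompactSupport f) : Summable fun p : Λ => f p := by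
  refine summable_of_hasFiniteSupport <|
    ((hΛ.finite_inter_preimage_fst hs (hf.image continuous_fst).isBounded).preimage
      Subtype.val_injective.injOn).subset fun p hp => ⟨p.2, ?_⟩
  exact ⟨p, subset_tsupport f hp, rfl⟩

lemma injOn_of_dist_lt (hΛ : UniformlyDiscrete s Λ) {F : Set (X × ι)} (hF : F ⊆ Λ)
    {φ : X × ι → X × ι} (hφ : ∀ p ∈ F, dist p.1 (φ p).1 < s / 2) : InjOn φ F := by
  intro p hp p' hp' hpp'
  refine hΛ.eq_of_dist_lt (hF hp) (hF hp') ?_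
  calc dist p.1 p'.1 ≤ dist p.1 (φ p).1 + dist p'.1 (φ p').1 := by
        rw [hpp']; exact dist_triangle_right _ _ _
    _ < s / 2 + s / 2 := add_lt_add (hφ p hp) (hφ p' hp')
    _ = s := add_halves s

end UniformlyDiscrete

lemma tsum_subtype_eq_finsetSum {β M : Type*} [AddCommMonoid M] [TopologicalSpace M]
    {Λ : Set β} {T : Finset β} {f : β → M} (hT : ↑T ⊆ Λ) (hf : ∀ p ∈ Λ, f p ≠ 0 → p ∈ T) :
    ∑' p : Λ, f p = ∑ p ∈ T, f p := by
  rw [tsum_subtype, tsum_eq_sum fun p hp => indicator_apply_eq_zero.2 fun hpΛ => ?_]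
  · exact Finset.sum_congr rfl fun p hp => indicator_of_mem (hT hp) f
  · by_contra hfp
    exact hp (hf p hpΛ hfp)

open Classical in
def nearPoint (δ : ℝ) (Λ : Set (X × ι)) (p : X × ι) : X × ι :=
  if h : p ∈ colouredThickening δ Λ then h.choose else p

lemma UniformlyDiscrete.nearPoint_eq {s : ℝ} {Λ : Set (X × ι)} (hΛ : UniformlyDiscrete s Λ)
    {p q : X × ι} (hq : q ∈ Λ) (hqp : q.2 = p.2) (hpq : dist p.1 q.1 < s / 2) :
    nearPoint (s / 2) Λ p = q := by
  have hp : p ∈ colouredThickening (s / 2) Λ := ⟨q, hq, hqp, hpq⟩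
  obtain ⟨hq'Λ, -, hpq'⟩ := hp.choose_spec
  rw [nearPoint, dif_pos hp]
  refine hΛ.eq_of_dist_lt hq'Λ hq ?_
  calc dist hp.choose.1 q.1 ≤ dist p.1 hp.choose.1 + dist p.1 q.1 := dist_triangle_left _ _ _
    _ < s / 2 + s / 2 := add_lt_add hpq' hpq
    _ = s := add_halves s

section Convergence

variable {l : Filter α} {Λs : α → Set (X × ι)} {Λ : Set (X × ι)} {s : ℝ}

lemma LocallyConverges.eventually_nearPoint (h : LocallyConverges l Λs Λ)
    (hΛs : ∀ n, UniformlyDiscrete s (Λs n)) {p : X × ι} (hp : p ∈ Λ) {δ : ℝ} (hδ : 0 < δ)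
    (hδs : δ ≤ s / 2) :
    ∀ᶠ n in l, nearPoint (s / 2) (Λs n) p ∈ Λs n ∧ (nearPoint (s / 2) (Λs n) p).2 = p.2 ∧
      dist p.1 (nearPoint (s / 2) (Λs n) p).1 < δ := by
  filter_upwards [h {p.1} isBounded_singleton δ hδ] with n hn
  obtain ⟨q, hq, hqp, hpq⟩ := hn.2 ⟨hp, rfl⟩
  rw [(hΛs n).nearPoint_eq hq hqp (hpq.trans_le hδs)]
  exact ⟨hq, hqp, hpq⟩

lemma LocallyConverges.tendsto_nearPoint [TopologicalSpace ι] [DiscreteTopology ι]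
    (h : LocallyConverges l Λs Λ) (hΛs : ∀ n, UniformlyDiscrete s (Λs n)) (hs : 0 < s)
    {p : X × ι} (hp : p ∈ Λ) : Tendsto (fun n => nearPoint (s / 2) (Λs n) p) l (𝓝 p) := by
  refine Prod.tendsto_iff _ _ |>.2 ⟨Metric.tendsto_nhds.2 fun ε hε => ?_, ?_⟩
  · filter_upwards [h.eventually_nearPoint hΛs hp (lt_min hε (half_pos hs)) (min_le_right _ _)]
      with n hn
    rw [dist_comm]
    exact hn.2.2.trans_le (min_le_left _ _)
  · rw [nhds_discrete, tendsto_pure]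
    filter_upwards [h.eventually_nearPoint hΛs hp (half_pos hs) le_rfl] with n hn using hn.2.1

lemma VaguelyConverges.tendsto_tsum_real [TopologicalSpace ι] (h : VaguelyConverges l Λs Λ)
    {g : X × ι → ℝ} (hg : Continuous g) (hgc : HasCompactSupport g) :
    Tendsto (fun n => ∑' p : Λs n, g p) l (𝓝 (∑' p : Λ, g p)) := by
  have := h (fun p => (g p : ℂ)) (Complex.continuous_ofReal.comp hg)
    (hgc.comp_left Complex.ofReal_zero)
  simpa only [← Complex.ofReal_tsum, Function.comp_def, Complex.ofReal_re] using
    (Complex.continuous_re.tendsto _).comp this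

lemma VaguelyConverges.eventually_mem_colouredThickening [TopologicalSpace ι]
    [DiscreteTopology ι] [ProperSpace X] (h : VaguelyConverges l Λs Λ)
    (hΛ : UniformlyDiscrete s Λ) {p : X × ι} (hp : p ∈ Λ) {δ : ℝ} (hδ : 0 < δ) (hδs : δ ≤ s) :
    ∀ᶠ n in l, p ∈ colouredThickening δ (Λs n) := by
  set U : Set (X × ι) := ball p.1 δ ×ˢ {p.2}
  obtain ⟨g, hgp, hgU, hgc, -⟩ := exists_continuous_one_zero_of_isCompact isCompact_singleton
    (isOpen_ball.prod (isOpen_discrete _)).isClosed_compl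
    (disjoint_singleton_left.2 (not_not.2 ⟨mem_ball_self hδ, rfl⟩ : p ∉ Uᶜ))
  have hsupp : ∀ q, g q ≠ 0 → q ∈ U := fun q hq => not_not.1 fun hqU => hq (hgU hqU)
  have hΛsum : ∑' q : Λ, g q = 1 := by
    rw [tsum_eq_single ⟨p, hp⟩ fun q hq => ?_]
    · exact hgp rfl
    · by_contra hgq
      exact hq (Subtype.ext (hΛ.eq_of_dist_lt q.2 hp ((hsupp q hgq).1.trans_le hδs)))
  filter_upwards [(h.tendsto_tsum_real g.continuous hgc).eventually_ne
    (hΛsum ▸ one_ne_zero)] with n hn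
  obtain ⟨q, hq⟩ : ∃ q : Λs n, g q ≠ 0 := by
    by_contra! H
    exact hn (by simp [H])
  obtain ⟨hqp, hqcol⟩ := hsupp q hq
  exact ⟨q, q.2, hqcol, by rw [dist_comm]; exact hqp⟩

lemma VaguelyConverges.eventually_subset_colouredThickening [TopologicalSpace ι]
    [DiscreteTopology ι] [Finite ι] [ProperSpace X] (h : VaguelyConverges l Λs Λ)
    (hΛs : ∀ n, UniformlyDiscrete s (Λs n)) (hs : 0 < s) {K : Set X} (hK : IsBounded K)
    {δ : ℝ} (hδ : 0 < δ) : ∀ᶠ n in l, Λs n ∩ Prod.fst ⁻¹' K ⊆ colouredThickening δ Λ := by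
  set S : Set (X × ι) := closure K ×ˢ univ \ colouredThickening δ Λ
  have hS : IsCompact S :=
    (hK.isCompact_closure.prod isCompact_univ).diff (isOpen_colouredThickening δ Λ)
  obtain ⟨g, hgS, hgΛ, hgc, hg01⟩ := exists_continuous_one_zero_of_isCompact hS isClosed_closure
    (disjoint_sdiff_left.mono_right (closure_subset_colouredThickening hδ Λ))
  have hΛsum : ∑' q : Λ, g q = 0 :=
    (tsum_congr fun q => hgΛ (subset_closure q.2)).trans tsum_zero
  filter_upwards [(h.tendsto_tsum_real g.continuous hgc).eventually_lt_const
    (hΛsum ▸ zero_lt_one)] with n hn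
  rintro q ⟨hqΛ, hqK⟩
  by_contra hq
  have hgq : g q = 1 := hgS ⟨⟨subset_closure hqK, mem_univ _⟩, hq⟩
  have hle : g q ≤ ∑' p : Λs n, g p :=
    ((hΛs n).summable hs hgc).le_tsum ⟨q, hqΛ⟩ fun p _ => (hg01 p).1
  linarith

lemma VaguelyConverges.locallyConverges [TopologicalSpace ι] [DiscreteTopology ι] [Finite ι]
    [ProperSpace X] (h : VaguelyConverges l Λs Λ) (hs : 0 < s)
    (hΛs : ∀ n, UniformlyDiscrete s (Λs n)) (hΛ : UniformlyDiscrete s Λ) :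
    LocallyConverges l Λs Λ := by
  intro K hK δ hδ
  have hcover : ∀ᶠ n in l, ∀ p ∈ Λ ∩ Prod.fst ⁻¹' K, p ∈ colouredThickening (min δ s) (Λs n) :=
    (hΛ.finite_inter_preimage_fst hs hK).eventually_all.2 fun p hp =>
      h.eventually_mem_colouredThickening hΛ hp.1 (lt_min hδ hs) (min_le_right _ _)
  filter_upwards [h.eventually_subset_colouredThickening hΛs hs hK hδ, hcover] with n hΛs' hΛ'
  refine ⟨hΛs', fun p hp => ?_⟩
  obtain ⟨q, hq, hqp, hpq⟩ := hΛ' p hp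
  exact ⟨q, hq, hqp, hpq.trans_le (min_le_left _ _)⟩

lemma LocallyConverges.vaguelyConverges [TopologicalSpace ι] [DiscreteTopology ι]
    [ProperSpace X] (h : LocallyConverges l Λs Λ) (hs : 0 < s)
    (hΛs : ∀ n, UniformlyDiscrete s (Λs n)) (hΛ : UniformlyDiscrete s Λ) :
    VaguelyConverges l Λs Λ := by
  classical
  intro f hf hfc
  set K : Set X := Prod.fst '' tsupport f
  have hK : IsBounded K := (hfc.image continuous_fst).isBounded
  have hsupp : ∀ p, f p ≠ 0 → p.1 ∈ K := fun p hp => ⟨p, subset_tsupport f hp, rfl⟩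
  set F : Set (X × ι) := Λ ∩ Prod.fst ⁻¹' thickening (s / 2) K
  have hF : F.Finite := hΛ.finite_inter_preimage_fst hs hK.thickening
  have hΛsum : ∑' p : Λ, f p = ∑ p ∈ hF.toFinset, f p :=
    tsum_subtype_eq_finsetSum (fun p hp => (hF.mem_toFinset.1 hp).1) fun p hp hfp =>
      hF.mem_toFinset.2 ⟨hp, self_subset_thickening (half_pos hs) K (hsupp p hfp)⟩
  have hΛssum : ∀ᶠ n in l,
      ∑' q : Λs n, f q = ∑ p ∈ hF.toFinset, f (nearPoint (s / 2) (Λs n) p) := by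
    filter_upwards [hF.eventually_all.2 fun p hp =>
      h.eventually_nearPoint hΛs hp.1 (half_pos hs) le_rfl,
      h K hK (s / 2) (half_pos hs)] with n hmatch hcover
    rw [← Finset.sum_image ((hΛ.injOn_of_dist_lt inter_subset_left fun p hp =>
      (hmatch p hp).2.2).mono fun p hp => hF.mem_toFinset.1 hp)]
    refine tsum_subtype_eq_finsetSum ?_ fun q hq hfq => ?_
    · simp only [Finset.coe_image, image_subset_iff, Finite.coe_toFinset]
      exact fun p hp => (hmatch p hp).1
    · obtain ⟨p, hp, hpq, hqp⟩ := hcover.1 ⟨hq, hsupp q hfq⟩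
      refine Finset.mem_image.2 ⟨p, hF.mem_toFinset.2 ⟨hp, ?_⟩,
        (hΛs n).nearPoint_eq hq hpq.symm (by rwa [dist_comm])⟩
      exact mem_thickening_iff.2 ⟨q.1, hsupp q hfq, by rwa [dist_comm]⟩
  rw [hΛsum]
  refine (tendsto_finsetSum _ fun p hp => (hf.tendsto p).comp
    (h.tendsto_nearPoint hΛs hs (hF.mem_toFinset.1 hp).1)).congr' ?_
  filter_upwards [hΛssum] with n hn using hn.symm

theorem vaguelyConverges_iff_locallyConverges [TopologicalSpace ι] [DiscreteTopology ι]
    [Finite ι] [ProperSpace X] (hs : 0 < s) (hΛs : ∀ n, UniformlyDiscrete s (Λs n))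
    (hΛ : UniformlyDiscrete s Λ) : VaguelyConverges l Λs Λ ↔ LocallyConverges l Λs Λ :=
  ⟨fun h => h.locallyConverges hs hΛs hΛ, fun h => h.vaguelyConverges hs hΛs hΛ⟩

end Convergence

end ColouredPointSets

lemma EuclideanSpace.dist_le_sqrt_card_mul {ι : Type*} [Fintype ι] {x y : EuclideanSpace ℝ ι}
    {c : ℝ} (hc : 0 ≤ c) (h : ∀ i, dist (x i) (y i) ≤ c) :
    dist x y ≤ √(Fintype.card ι) * c := by
  rw [EuclideanSpace.dist_eq]
  calc √(∑ i, dist (x i) (y i) ^ 2) ≤ √(∑ _i : ι, c ^ 2) :=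
        Real.sqrt_le_sqrt (Finset.sum_le_sum fun i _ => pow_le_pow_left₀ dist_nonneg (h i) 2)
    _ = √(Fintype.card ι) * c := by
        simp [Real.sqrt_mul, Real.sqrt_sq hc]

section Cubes

variable {d m : ℕ}

lemma isBounded_cube (R : ℝ) : IsBounded (cube d R) := by
  refine (isBounded_closedBall (x := 0) (r := √d * max (R / 2) 0)).subset fun x hx => ?_
  have hx0 := EuclideanSpace.dist_le_sqrt_card_mul (x := x) (y := 0) (le_max_right (R / 2) 0)
    fun i => by
      rw [PiLp.zero_apply, Real.dist_eq, sub_zero]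
      exact (hx i).le.trans (le_max_left _ _)
  rwa [Fintype.card_fin, ← mem_closedBall] at hx0

lemma Bornology.IsBounded.exists_subset_cube {K : Set (Vd d)} (hK : IsBounded K) :
    ∃ R > 0, K ⊆ cube d R := by
  obtain ⟨C, hC, hKC⟩ := hK.exists_pos_norm_le
  refine ⟨2 * C + 1, by positivity, fun x hx i => ?_⟩
  calc |x i| = ‖x i‖ := (Real.norm_eq_abs _).symm
    _ ≤ ‖x‖ := PiLp.norm_apply_le x i
    _ ≤ C := hKC x hx
    _ < (2 * C + 1) / 2 := by linarith

lemma mem_addc_cube_iff {ε : ℝ} {Λ : Set (Em d m)} {p : Em d m} :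
    p ∈ addc (cube d ε) Λ ↔ ∃ q ∈ Λ, q.2 = p.2 ∧ ∀ i, dist (p.1 i) (q.1 i) < ε / 2 := by
  constructor
  · rintro ⟨b, hb, q, hq, rfl⟩
    exact ⟨q, hq, rfl, fun i => by simpa [Real.dist_eq] using hb i⟩
  · rintro ⟨q, hq, hqp, hpq⟩
    exact ⟨p.1 - q.1, fun i => by simpa [Real.dist_eq] using hpq i, q, hq,
      Prod.ext (by simp) hqp.symm⟩

lemma colouredThickening_subset_addc_cube (ε : ℝ) (Λ : Set (Em d m)) :
    colouredThickening (ε / 2) Λ ⊆ addc (cube d ε) Λ := fun _ ⟨q, hq, hqp, hpq⟩ =>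
  mem_addc_cube_iff.2 ⟨q, hq, hqp, fun i => (PiLp.dist_apply_le _ _ i).trans_lt hpq⟩

lemma addc_cube_subset_colouredThickening {ε δ : ℝ} (hε : 0 ≤ ε) (hεδ : √d * (ε / 2) < δ)
    (Λ : Set (Em d m)) : addc (cube d ε) Λ ⊆ colouredThickening δ Λ := by
  intro p hp
  obtain ⟨q, hq, hqp, hpq⟩ := mem_addc_cube_iff.1 hp
  refine ⟨q, hq, hqp, lt_of_le_of_lt ?_ hεδ⟩
  simpa using EuclideanSpace.dist_le_sqrt_card_mul (by positivity) fun i => (hpq i).le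

lemma UDc.uniformlyDiscrete {r : ℝ} {Λ : Set (Em d m)} (hΛ : UDc r Λ) :
    UniformlyDiscrete (r / 2) Λ := by
  intro p hp q hq hpq
  by_contra! hlt
  refine hpq (hΛ q.1 ⟨hp, p.1 - q.1, fun i => ?_, by simp⟩ ⟨hq, 0, fun i => ?_, by simp⟩)
  · simpa [Real.dist_eq] using (PiLp.dist_apply_le p.1 q.1 i).trans_lt hlt
  · simpa using dist_nonneg.trans_lt hlt

theorem locallyConverges_atTop_iff_cube (Λs : ℕ → Set (Em d m)) (Λ : Set (Em d m)) :
    LocallyConverges atTop Λs Λ ↔ ∀ R > (0 : ℝ), ∀ ε > (0 : ℝ), ∃ N : ℕ, ∀ n ≥ N,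
      restc (cube d R) (Λs n) ⊆ addc (cube d ε) Λ ∧
        restc (cube d R) Λ ⊆ addc (cube d ε) (Λs n) := by
  constructor
  · intro h R _ ε hε
    refine eventually_atTop.1 ?_
    filter_upwards [h _ (isBounded_cube R) (ε / 2) (half_pos hε)] with n hn
    exact ⟨hn.1.trans (colouredThickening_subset_addc_cube ε Λ),
      hn.2.trans (colouredThickening_subset_addc_cube ε (Λs n))⟩
  · intro h K hK δ hδ
    obtain ⟨R, hR, hKR⟩ := hK.exists_subset_cube
    set ε := δ / (√d + 1)
    have hε : 0 < ε := by positivity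
    have hεδ : √d * (ε / 2) < δ :=
      calc √d * (ε / 2) < (√d + 1) * (ε / 2) := by gcongr; linarith
        _ = δ / 2 := by simp only [ε]; field_simp
        _ < δ := half_lt_self hδ
    obtain ⟨N, hN⟩ := h R hR ε hε
    filter_upwards [eventually_ge_atTop N] with n hn
    exact ⟨(inter_subset_inter_right _ (preimage_mono hKR)).trans
        ((hN n hn).1.trans (addc_cube_subset_colouredThickening hε.le hεδ Λ)),
      (inter_subset_inter_right _ (preimage_mono hKR)).trans
        ((hN n hn).2.trans (addc_cube_subset_colouredThickening hε.le hεδ (Λs n)))⟩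

end Cubes

theorem vague_iff_local_general {d m : ℕ} {r : ℝ} (hr : 0 < r)
    (Λs : ℕ → Set (Em d m)) (Λ : Set (Em d m))
    (hΛs : ∀ n, UDc r (Λs n)) (hΛ : UDc r Λ) :
    (∀ f : Em d m → ℂ, Continuous f → HasCompactSupport f →
        Tendsto (fun n => ∑' p : (Λs n), f (p : Em d m)) atTop (𝓝 (∑' p : Λ, f (p : Em d m))))
    ↔ (∀ R > (0 : ℝ), ∀ ε > (0 : ℝ), ∃ N : ℕ, ∀ n ≥ N,
        restc (cube d R) (Λs n) ⊆ addc (cube d ε) Λ ∧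
        restc (cube d R) Λ ⊆ addc (cube d ε) (Λs n)) :=
  (vaguelyConverges_iff_locallyConverges (half_pos hr) (fun n => (hΛs n).uniformlyDiscrete)
    hΛ.uniformlyDiscrete).trans (locallyConverges_atTop_iff_cube Λs Λ)

/-- For `r`-uniformly discrete coloured point sets, vague convergence of the
associated point measures is equivalent to convergence in the local topology. -/
theorem vague_iff_local {d m : ℕ} (hd : 0 < d) (hm : 0 < m) {r : ℝ} (hr : 0 < r)
    (Λs : ℕ → Set (Em d m)) (Λ : Set (Em d m))
    (hΛs : ∀ n, UDc r (Λs n)) (hΛ : UDc r Λ) :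
    (∀ f : Em d m → ℂ, Continuous f → HasCompactSupport f →
        Tendsto (fun n => ∑' p : (Λs n), f (p : Em d m)) atTop (𝓝 (∑' p : Λ, f (p : Em d m))))
    ↔ (∀ R > (0 : ℝ), ∀ ε > (0 : ℝ), ∃ N : ℕ, ∀ n ≥ N,
        restc (cube d R) (Λs n) ⊆ addc (cube d ε) Λ ∧
        restc (cube d R) Λ ⊆ addc (cube d ε) (Λs n)) :=
  vague_iff_local_general hr Λs Λ hΛs hΛ
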